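/- Define fB (x₁, x₂) = (−x₁/8 − 2x₂, x₁ − x₂/8) on ℝ × ℝ and VB (x₁, x₂) = x₁² + 2x₂². Then every solution of fB satisfies the exponential decay bound VB(φ t) ≤ VB(φ 0)·exp(−t/4): for every t ≥ 0 and every φ : ℝ → ℝ × ℝ that has derivative fB (φ s) within Set.Icc 0 t at each s ∈ Set.Icc 0 t, one has (φ t).1² + 2·(φ t).2² ≤ ((φ 0).1² + 2·(φ 0).2²)·Real.exp (−t/4). -/

import Mathlib

/-!
`VB` is a strict Lyapunov function for `fB`: along any solution, the cross terms `∓4 x₁ x₂` of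
`d/dt VB = 2 x₁ x₁' + 4 x₂ x₂'` cancel and leave exactly `-VB / 4`. Grönwall's inequality
then gives the exponential decay.
-/

/-- The vector field `fB (x₁, x₂) = (−x₁/8 − 2x₂, x₁ − x₂/8)`. -/
noncomputable def fB (x : ℝ × ℝ) : ℝ × ℝ := (-x.1 / 8 - 2 * x.2, x.1 - x.2 / 8)

open Set Real Topology

def VB (x : ℝ × ℝ) : ℝ := x.1 ^ 2 + 2 * x.2 ^ 2

theorem le_mul_exp_of_deriv_right_le_mul {f f' : ℝ → ℝ} {K a b : ℝ}
    (hf : ContinuousOn f (Icc a b)) (hf' : ∀ x ∈ Ico a b, HasDerivWithinAt f (f' x) (Ici x) x)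
    (bound : ∀ x ∈ Ico a b, f' x ≤ K * f x) :
    ∀ x ∈ Icc a b, f x ≤ f a * exp (K * (x - a)) := by
  intro x hx
  have hslope : ∀ x ∈ Ico a b, ∀ r, f' x < r → ∃ᶠ z in 𝓝[>] x, (z - x)⁻¹ * (f z - f x) < r :=
    fun x hx _ hr => (hf' x hx).liminf_right_slope_le hr
  have := le_gronwallBound_of_liminf_deriv_right_le (K := K) (ε := 0) hf hslope le_rfl
    (fun x hx => (bound x hx).trans_eq (add_zero _).symm) x hx
  rwa [gronwallBound_ε0] at this

theorem HasDerivWithinAt.VB_comp {φ : ℝ → ℝ × ℝ} {v : ℝ × ℝ} {s : Set ℝ} {t : ℝ}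
    (hφ : HasDerivWithinAt φ v s t) :
    HasDerivWithinAt (fun u => VB (φ u)) (2 * (φ t).1 * v.1 + 4 * (φ t).2 * v.2) s t := by
  have h₁ : HasDerivWithinAt (fun u => (φ u).1) v.1 s t := hφ.fst
  have h₂ : HasDerivWithinAt (fun u => (φ u).2) v.2 s t := hφ.snd
  refine ((h₁.pow 2).add ((h₂.pow 2).const_mul 2)).congr_deriv ?_
  push_cast
  ring

theorem HasDerivWithinAt.VB_comp_of_fB {φ : ℝ → ℝ × ℝ} {s : Set ℝ} {t : ℝ}
    (hφ : HasDerivWithinAt φ (fB (φ t)) s t) :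
    HasDerivWithinAt (fun u => VB (φ u)) (-(1 / 4) * VB (φ t)) s t := by
  convert hφ.VB_comp using 1
  simp only [fB, VB]
  ring

theorem lyapunov_exponential_decay_fB :
    ∀ t : ℝ, 0 ≤ t → ∀ φ : ℝ → ℝ × ℝ,
      (∀ s ∈ Set.Icc (0 : ℝ) t, HasDerivWithinAt φ (fB (φ s)) (Set.Icc (0 : ℝ) t) s) →
      (φ t).1 ^ 2 + 2 * (φ t).2 ^ 2 ≤
        ((φ 0).1 ^ 2 + 2 * (φ 0).2 ^ 2) * Real.exp (-t / 4) := by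
  intro t ht φ hφ
  have hV (s) (hs : s ∈ Icc 0 t) :
      HasDerivWithinAt (fun u => VB (φ u)) (-(1 / 4) * VB (φ s)) (Icc 0 t) s :=
    (hφ s hs).VB_comp_of_fB
  have hdecay := le_mul_exp_of_deriv_right_le_mul (fun s hs => (hV s hs).continuousWithinAt)
    (fun s hs => (hV s (Ico_subset_Icc_self hs)).mono_of_mem_nhdsWithin
      (Icc_mem_nhdsGE_of_mem hs))
    (fun s _ => le_rfl) t (right_mem_Icc.2 ht)
  rwa [show -t / 4 = -(1 / 4) * (t - 0) by ring]
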